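/- Time-reversal identity: for every fixed t > 0, the random vector (A_t, exp(-2 B_t) · A_t) has the same distribution as (exp(-2 B_t) · A_t, A_t). -/

import Mathlib

/-!
Let `W_s = B_{t-s} - B_t` be the Brownian motion reversed at time `t`. On `[0, t]` it has the
finite-dimensional distributions of `B`: its increments along a grid are those of `B` in reverse
order and with opposite sign, hence again independent centred Gaussians with the same variances.
Since `W_t = -B_t` and `∫₀ᵗ exp (2 W_s) ds = exp (-2 B_t) A_t`, the pair
`(A_t(W), exp (-2 W_t) A_t(W))` is `(exp (-2 B_t) A_t, A_t)`. Both pairs are almost sure limits of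
Riemann sums over the uniform grid, which are one and the same continuous function of the grid
values of `B`, resp. `W`; so the approximations have equal laws, and so do their limits.
-/

open MeasureTheory ProbabilityTheory Real

noncomputable section

/-- A standard linear Brownian motion started from `0`, on a probability space `Ω`:
measurable in `ω` at each time, starts at `0`, has a.s. continuous paths, Gaussian
increments `B t - B s ~ N(0, t - s)` for `0 ≤ s ≤ t`, and independent increments. -/
structure IsBrownianMotion {Ω : Type*} [MeasureSpace Ω] (B : ℝ → Ω → ℝ) : Prop where
  meas : ∀ t, Measurable (B t)
  init : ∀ᵐ ω ∂(ℙ : Measure Ω), B 0 ω = 0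
  cont : ∀ᵐ ω ∂(ℙ : Measure Ω), Continuous fun t => B t ω
  incr : ∀ s t : ℝ, 0 ≤ s → s ≤ t →
    Measure.map (fun ω => B t ω - B s ω) ℙ = gaussianReal 0 (Real.toNNReal (t - s))
  indep : ∀ (n : ℕ) (t : Fin (n + 1) → ℝ), Monotone t → 0 ≤ t 0 →
    iIndepFun
      (fun i : Fin n => fun ω => B (t i.succ) ω - B (t i.castSucc) ω) ℙ

/-- The exponential functional `A_t = ∫_0^t exp (2 B_s) ds` of a linear Brownian motion. -/
def expFunctional {Ω : Type*} [MeasureSpace Ω] (B : ℝ → Ω → ℝ) (t : ℝ) (ω : Ω) : ℝ :=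
  ∫ s in (0:ℝ)..t, Real.exp (2 * B s ω)

/-- The σ-algebra generated by a process. -/
def processSigma {Ω : Type*} [MeasureSpace Ω] (B : ℝ → Ω → ℝ) : MeasurableSpace Ω :=
  ⨆ t : ℝ, MeasurableSpace.comap (B t) inferInstance

open Filter Topology Set

theorem Fin.eq_partialSum_sub {G : Type*} [AddCommGroup G] {n : ℕ} {v : Fin (n + 1) → G}
    (h0 : v 0 = 0) : v = Fin.partialSum fun j => v j.succ - v j.castSucc := by
  conv_lhs => rw [← Fin.partialSum_left_neg v]
  simp [h0, neg_add_eq_sub]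

theorem Fin.continuous_partialSum {M : Type*} [AddMonoid M] [TopologicalSpace M]
    [ContinuousAdd M] (n : ℕ) : Continuous (Fin.partialSum : (Fin n → M) → Fin (n + 1) → M) :=
  continuous_pi fun i => i.induction (by simpa using continuous_const) fun j ih => by
    simp only [Fin.partialSum_succ]
    exact ih.add (continuous_apply j)

def timeReversal {Ω : Type*} (B : ℝ → Ω → ℝ) (t : ℝ) : ℝ → Ω → ℝ :=
  fun s ω => B (t - s) ω - B t ω

def uniformGrid (t : ℝ) (n : ℕ) (k : Fin (n + 1)) : ℝ :=
  k * t / n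

theorem monotone_uniformGrid {t : ℝ} (ht : 0 ≤ t) (n : ℕ) : Monotone (uniformGrid t n) :=
  fun i j hij => by
    unfold uniformGrid
    gcongr
    exact hij

@[simp]
theorem uniformGrid_zero (t : ℝ) (n : ℕ) : uniformGrid t n 0 = 0 := by
  simp [uniformGrid]

theorem uniformGrid_last_le {t : ℝ} (ht : 0 ≤ t) (n : ℕ) : uniformGrid t n (Fin.last n) ≤ t :=
  div_le_of_le_mul₀ (by positivity) ht (by simp [mul_comm])

namespace IsBrownianMotion

variable {Ω : Type*} [MeasureSpace Ω] {B : ℝ → Ω → ℝ} {n : ℕ} {τ : Fin (n + 1) → ℝ}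

theorem measurable_sub (hB : IsBrownianMotion B) (s t : ℝ) :
    Measurable fun ω => B t ω - B s ω :=
  (hB.meas t).sub (hB.meas s)

theorem measurable_timeReversal (hB : IsBrownianMotion B) (t s : ℝ) :
    Measurable (timeReversal B t s) :=
  hB.measurable_sub t (t - s)

theorem map_increments (hB : IsBrownianMotion B) (hτ : Monotone τ) (hτ0 : 0 ≤ τ 0) :
    (ℙ : Measure Ω).map (fun ω j => B (τ j.succ) ω - B (τ j.castSucc) ω)
      = Measure.pi fun j : Fin n => gaussianReal 0 (τ j.succ - τ j.castSucc).toNNReal := by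
  refine ((hB.indep n τ hτ hτ0).map_fun_eq_pi_map
    fun j => (hB.measurable_sub _ _).aemeasurable).trans ?_
  congr with j : 1
  exact hB.incr _ _ (hτ0.trans (hτ (Fin.zero_le _))) (hτ (Fin.castSucc_le_succ j))

theorem map_increments_timeReversal (hB : IsBrownianMotion B) {t : ℝ} (hτ : Monotone τ)
    (hτt : τ (Fin.last n) ≤ t) :
    (ℙ : Measure Ω).map (fun ω j =>
        timeReversal B t (τ j.succ) ω - timeReversal B t (τ j.castSucc) ω)
      = Measure.pi fun j : Fin n => gaussianReal 0 (τ j.succ - τ j.castSucc).toNNReal := by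
  set σ : Fin (n + 1) → ℝ := fun i => t - τ i.rev
  have hσ : Monotone σ := fun i j hij => sub_le_sub_left (hτ (Fin.rev_le_rev.mpr hij)) t
  have hσ0 : 0 ≤ σ 0 := by simpa [σ] using hτt
  have hrev : (fun j ω => timeReversal B t (τ j.succ) ω - timeReversal B t (τ j.castSucc) ω)
      = fun (j : Fin n) => Neg.neg ∘ fun ω => B (σ j.rev.succ) ω - B (σ j.rev.castSucc) ω := by
    ext j ω
    simp [σ, timeReversal, Fin.rev_succ, Fin.rev_castSucc]
  have hind : iIndepFun
      (fun (j : Fin n) ω => timeReversal B t (τ j.succ) ω - timeReversal B t (τ j.castSucc) ω)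
      ℙ := by
    rw [hrev]
    exact ((hB.indep n σ hσ hσ0).precomp Fin.rev_injective).comp _ fun _ => measurable_neg
  refine (hind.map_fun_eq_pi_map fun j => ?_).trans ?_
  · exact ((hB.measurable_timeReversal _ _).sub (hB.measurable_timeReversal _ _)).aemeasurable
  congr with j : 1
  rw [congrFun hrev j, ← Measure.map_map measurable_neg (hB.measurable_sub _ _),
    hB.incr _ _ (hσ0.trans (hσ (Fin.zero_le _))) (hσ (Fin.castSucc_le_succ _)),
    gaussianReal_map_neg, neg_zero]
  congr 2
  simp only [σ, Fin.rev_succ, Fin.rev_castSucc, Fin.rev_rev]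
  ring

theorem map_timeReversal (hB : IsBrownianMotion B) {t : ℝ} (hτ : Monotone τ) (hτ0 : τ 0 = 0)
    (hτt : τ (Fin.last n) ≤ t) :
    (ℙ : Measure Ω).map (fun ω k => timeReversal B t (τ k) ω)
      = (ℙ : Measure Ω).map (fun ω k => B (τ k) ω) := by
  have hW : (fun ω k => timeReversal B t (τ k) ω) = Fin.partialSum ∘
      fun ω j => timeReversal B t (τ j.succ) ω - timeReversal B t (τ j.castSucc) ω := by
    ext1 ω
    exact Fin.eq_partialSum_sub (by simp [timeReversal, hτ0])
  have hB' : (fun ω k => B (τ k) ω) =ᵐ[ℙ] Fin.partialSum ∘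
      fun ω j => B (τ j.succ) ω - B (τ j.castSucc) ω := by
    filter_upwards [hB.init] with ω h0
    exact Fin.eq_partialSum_sub (by rwa [hτ0])
  have hWm : Measurable fun ω (j : Fin n) =>
      timeReversal B t (τ j.succ) ω - timeReversal B t (τ j.castSucc) ω :=
    measurable_pi_lambda _ fun j =>
      (hB.measurable_timeReversal _ _).sub (hB.measurable_timeReversal _ _)
  have hBm : Measurable fun ω (j : Fin n) => B (τ j.succ) ω - B (τ j.castSucc) ω :=
    measurable_pi_lambda _ fun j => hB.measurable_sub _ _
  rw [Measure.map_congr hB', hW, ← Measure.map_map (Fin.continuous_partialSum n).measurable hWm,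
    ← Measure.map_map (Fin.continuous_partialSum n).measurable hBm,
    hB.map_increments_timeReversal hτ hτt, hB.map_increments hτ hτ0.ge]

end IsBrownianMotion

theorem norm_smul_sub_intervalIntegral_le {E : Type*} [NormedAddCommGroup E] [NormedSpace ℝ E]
    [CompleteSpace E] {g : ℝ → E} {x y c ε : ℝ} (hxy : x ≤ y)
    (hg : IntervalIntegrable g volume x y) (hε : ∀ s ∈ Icc x y, ‖g s - g c‖ ≤ ε) :
    ‖(y - x) • g c - ∫ s in x..y, g s‖ ≤ ε * (y - x) := by
  rw [← intervalIntegral.integral_const,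
    ← intervalIntegral.integral_sub intervalIntegrable_const hg, ← abs_of_nonneg (sub_nonneg.mpr hxy)]
  refine intervalIntegral.norm_integral_le_of_norm_le_const fun s hs => ?_
  rw [norm_sub_rev]
  exact hε s (Ioc_subset_Icc_self (uIoc_of_le hxy ▸ hs))

theorem norm_riemannSum_sub_intervalIntegral_le {E : Type*} [NormedAddCommGroup E]
    [NormedSpace ℝ E] [CompleteSpace E] {g : ℝ → E} {a b η : ℝ} {n : ℕ} (hab : a ≤ b)
    (hn : 0 < n) (hg : ContinuousOn g (Icc a b))
    (hη : ∀ x ∈ Icc a b, ∀ y ∈ Icc a b, dist x y ≤ (b - a) / n → dist (g x) (g y) ≤ η) :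
    ‖∑ k ∈ Finset.range n, ((b - a) / n) • g (a + k * ((b - a) / n)) - ∫ s in a..b, g s‖
      ≤ η * (b - a) := by
  set h := (b - a) / n
  set x : ℕ → ℝ := fun k => a + k * h
  have hh : 0 ≤ h := div_nonneg (sub_nonneg.mpr hab) (Nat.cast_nonneg n)
  have hxn : x n = b := by simp only [x, h]; field_simp; ring
  have hxx : ∀ k, x (k + 1) - x k = h := fun k => by simp only [x]; push_cast; ring
  have hx : ∀ k ≤ n, x k ∈ Icc a b := fun k hk => by
    refine ⟨le_add_of_nonneg_right (by positivity), ?_⟩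
    rw [← hxn]
    exact add_le_add_right (mul_le_mul_of_nonneg_right (Nat.cast_le.mpr hk) hh) a
  have hint : ∀ k < n, IntervalIntegrable g volume (x k) (x (k + 1)) := fun k hk =>
    (hg.mono (uIcc_subset_Icc (hx k hk.le) (hx (k + 1) hk))).intervalIntegrable
  have hterm : ∀ k < n, ‖h • g (x k) - ∫ s in x k..x (k + 1), g s‖ ≤ η * h := fun k hk => by
    rw [← hxx k]
    refine norm_smul_sub_intervalIntegral_le (by linarith [hxx k]) (hint k hk) fun s hs => ?_
    rw [← dist_eq_norm]
    refine hη s (Icc_subset_Icc (hx k hk.le).1 (hx (k + 1) hk).2 hs) (x k) (hx k hk.le) ?_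
    rw [Real.dist_eq, abs_of_nonneg (by linarith [hs.1])]
    linarith [hs.2, hxx k]
  have hsum := intervalIntegral.sum_integral_adjacent_intervals hint
  rw [hxn, show x 0 = a by simp [x]] at hsum
  rw [← hsum, ← Finset.sum_sub_distrib]
  calc _ ≤ ∑ k ∈ Finset.range n, ‖h • g (x k) - ∫ s in x k..x (k + 1), g s‖ := norm_sum_le _ _
    _ ≤ ∑ k ∈ Finset.range n, η * h :=
      Finset.sum_le_sum fun k hk => hterm k (Finset.mem_range.mp hk)
    _ = η * (b - a) := by
      simp only [Finset.sum_const, Finset.card_range, nsmul_eq_mul, h]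
      field_simp

theorem tendsto_riemannSum_intervalIntegral {E : Type*} [NormedAddCommGroup E] [NormedSpace ℝ E]
    [CompleteSpace E] {g : ℝ → E} {a b : ℝ} (hab : a ≤ b) (hg : ContinuousOn g (Icc a b)) :
    Tendsto (fun n : ℕ => ∑ k ∈ Finset.range n, ((b - a) / n) • g (a + k * ((b - a) / n)))
      atTop (𝓝 (∫ s in a..b, g s)) := by
  rw [Metric.tendsto_atTop]
  intro ε hε
  obtain ⟨δ, hδ, hgδ⟩ := Metric.uniformContinuousOn_iff_le.mp
    (isCompact_Icc.uniformContinuousOn_of_continuous hg) (ε / (b - a + 1)) (by positivity)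
  obtain ⟨N, hN⟩ := exists_nat_gt ((b - a) / δ)
  refine ⟨N + 1, fun n hn => ?_⟩
  have hn0 : (0 : ℝ) < n := by exact_mod_cast Nat.lt_of_lt_of_le N.succ_pos hn
  have hmesh : (b - a) / n ≤ δ := by
    rw [div_le_iff₀ hn0]
    have : (N : ℝ) + 1 ≤ n := by exact_mod_cast hn
    nlinarith [(div_lt_iff₀ hδ).mp hN]
  rw [dist_eq_norm]
  calc _ ≤ ε / (b - a + 1) * (b - a) :=
        norm_riemannSum_sub_intervalIntegral_le hab (by exact_mod_cast hn0) hg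
          fun x hx y hy hxy => hgδ x hx y hy (hxy.trans hmesh)
    _ < ε := by
      rw [div_mul_eq_mul_div, div_lt_iff₀ (by linarith)]
      nlinarith

/-- The left Riemann sum `Aₙ` of `A_t` on the grid `k t / n`, paired with `exp (-2 vₙ) * Aₙ`,
computed from the grid values `v = (v₀, …, vₙ)` of the path. -/
def discreteFunctionalPair (t : ℝ) (n : ℕ) (v : Fin (n + 1) → ℝ) : ℝ × ℝ :=
  (∑ k : Fin n, t / n * exp (2 * v k.castSucc),
    exp (-2 * v (Fin.last n)) * ∑ k : Fin n, t / n * exp (2 * v k.castSucc))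

theorem continuous_discreteFunctionalPair (t : ℝ) (n : ℕ) :
    Continuous (discreteFunctionalPair t n) := by
  unfold discreteFunctionalPair
  fun_prop

theorem tendsto_discreteFunctionalPair {f : ℝ → ℝ} (hf : Continuous f) {t : ℝ} (ht : 0 ≤ t) :
    Tendsto (fun n : ℕ => discreteFunctionalPair t n fun k => f (uniformGrid t n k)) atTop
      (𝓝 (∫ s in 0..t, exp (2 * f s), exp (-2 * f t) * ∫ s in 0..t, exp (2 * f s))) := by
  have hsum : Tendsto (fun n : ℕ => ∑ k : Fin n, t / n * exp (2 * f ((k : ℕ) * t / n))) atTop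
      (𝓝 (∫ s in 0..t, exp (2 * f s))) := by
    refine (tendsto_riemannSum_intervalIntegral ht (g := fun s => exp (2 * f s))
      (by fun_prop)).congr fun n => ?_
    rw [Fin.sum_univ_eq_sum_range (fun k => t / n * exp (2 * f (k * t / n)))]
    simp [mul_div_assoc]
  refine (hsum.prodMk_nhds (hsum.const_mul _)).congr' ?_
  filter_upwards [eventually_ne_atTop 0] with n hn
  simp [discreteFunctionalPair, uniformGrid, hn]

theorem integral_exp_timeReversal (f : ℝ → ℝ) (t : ℝ) :
    ∫ s in 0..t, exp (2 * (f (t - s) - f t)) = exp (-2 * f t) * ∫ s in 0..t, exp (2 * f s) := by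
  simp_rw [show ∀ s, 2 * (f (t - s) - f t) = -2 * f t + 2 * f (t - s) from fun s => by ring,
    exp_add]
  rw [intervalIntegral.integral_const_mul,
    intervalIntegral.integral_comp_sub_left (fun s => exp (2 * f s)), sub_self, sub_zero]

theorem map_eq_of_ae_tendsto_of_map_eq {ι Ω E : Type*} [MeasurableSpace Ω] {μ : Measure Ω}
    [IsProbabilityMeasure μ] [TopologicalSpace E] [TopologicalSpace.PseudoMetrizableSpace E]
    [MeasurableSpace E] [BorelSpace E] {l : Filter ι} [l.NeBot] [l.IsCountablyGenerated]
    {X Y : ι → Ω → E} {Z Z' : Ω → E}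
    (hX : ∀ i, AEMeasurable (X i) μ) (hY : ∀ i, AEMeasurable (Y i) μ)
    (hXZ : ∀ᵐ ω ∂μ, Tendsto (fun i => X i ω) l (𝓝 (Z ω)))
    (hYZ : ∀ᵐ ω ∂μ, Tendsto (fun i => Y i ω) l (𝓝 (Z' ω)))
    (hXY : ∀ i, μ.map (X i) = μ.map (Y i)) :
    μ.map Z = μ.map Z' := by
  have hZ := tendstoInDistribution_of_ae_tendsto hX
    (aemeasurable_of_tendsto_metrizable_ae l hX hXZ) hXZ
  have hZ' := tendstoInDistribution_of_ae_tendsto hY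
    (aemeasurable_of_tendsto_metrizable_ae l hY hYZ) hYZ
  have := tendsto_nhds_unique hZ.tendsto (by simpa only [hXY] using hZ'.tendsto)
  simpa using congrArg Subtype.val this

/-- **Time-reversal identity.** For every fixed `t > 0`, the random vector
`(A_t, exp(-2 B_t) · A_t)` has the same law as `(exp(-2 B_t) · A_t, A_t)`. -/
theorem time_reversal_identity {Ω : Type*} [MeasureSpace Ω]
    [IsProbabilityMeasure (ℙ : Measure Ω)]
    (B : ℝ → Ω → ℝ) (hB : IsBrownianMotion B) (t : ℝ) (ht : 0 < t) :
    Measure.map (fun ω =>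
        (expFunctional B t ω, Real.exp (-2 * B t ω) * expFunctional B t ω)) ℙ
      = Measure.map (fun ω =>
        (Real.exp (-2 * B t ω) * expFunctional B t ω, expFunctional B t ω)) ℙ := by
  have hgridMeas (X : ℝ → Ω → ℝ) (hX : ∀ s, Measurable (X s)) (n : ℕ) :
      Measurable fun ω k => X (uniformGrid t n k) ω :=
    measurable_pi_lambda _ fun k => hX _
  have hΦ (n : ℕ) := (continuous_discreteFunctionalPair t n).measurable
  refine map_eq_of_ae_tendsto_of_map_eq (l := atTop)
    (fun n => ((hΦ n).comp (hgridMeas B hB.meas n)).aemeasurable)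
    (fun n => ((hΦ n).comp (hgridMeas _ (hB.measurable_timeReversal t) n)).aemeasurable) ?_ ?_
    fun n => ?_
  · filter_upwards [hB.cont] with ω hω using tendsto_discreteFunctionalPair hω ht.le
  · filter_upwards [hB.cont, hB.init] with ω hω h0
    have hW : Continuous fun s => timeReversal B t s ω := by unfold timeReversal; fun_prop
    have hlim := tendsto_discreteFunctionalPair hW ht.le
    simp only [timeReversal, integral_exp_timeReversal (B · ω) t, sub_self, h0] at hlim
    refine hlim.trans (le_of_eq ?_)
    rw [← mul_assoc, ← exp_add]
    simp [expFunctional]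
  · have hlaw := congrArg (Measure.map (discreteFunctionalPair t n)) <| hB.map_timeReversal
      (monotone_uniformGrid ht.le n) (uniformGrid_zero t n) (uniformGrid_last_le ht.le n)
    rwa [Measure.map_map (hΦ n) (hgridMeas _ (hB.measurable_timeReversal t) n),
      Measure.map_map (hΦ n) (hgridMeas B hB.meas n), eq_comm] at hlaw
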